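/- Let φ₀ : ℝ × ℤ × ℤ → Mat(m×m, ℂ) be entrywise differentiable in t and satisfy (φ₀_{,1} − φ₀)_t = (φ₀_{,2} − φ₀)(φ₀_{,1} − φ₀ + I) − (φ₀_{,1} − φ₀ + I)(φ₀_{,2} − φ₀)_{,1,-2}. Let P, Q be constant n×n complex matrices, let ω̃ : ℝ → Mat(n×n, ℂ) be entrywise differentiable (a function of t only), and set γ₁ := ω̃ P − Q ω̃, γ₂ := −ω̃_t. Let θ (m×n) and η (n×m) be entrywise differentiable in t and satisfy (θ_{,1} + θ P)_{,2} = −θ_{,1} − (φ₀_{,1} − φ₀)_{,2} θ_{,1}, θ_t = θ_{,2} + (φ₀_{,2} − φ₀) θ, (η + Q η_{,1})_{,-2} = −η − η (φ₀_{,1} − φ₀), and η_t = −η_{,-2} − η (φ₀_{,2} − φ₀). Let Ω̃ be an invertible n×n matrix function, entrywise differentiable in t, satisfying Ω̃_{,2} − Ω̃ = η θ, (Ω̃ P)_{,2} = Q Ω̃_{,1} − η θ_{,1} + γ₁, and Ω̃_t = η_{,-2} θ − γ₂. Define φ := φ₀ + θ Ω̃^{-1} η_{,-2}, q̃ := −θ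 Ω̃^{-1}, r̃ := −Ω̃_{,2}^{-1} η. Then: (1) (φ_{,1} − φ)_t + (φ_{,1} − φ + I)(φ_{,2} − φ)_{,1,-2} − (φ_{,2} − φ)(φ_{,1} − φ + I) = (q̃_{,2} γ₁ r̃_{,1,-2})_{,-2} − q̃_{,2} γ₁ r̃_{,1,-2} + (q̃ γ₂ r̃_{,-2})_{,1} − q̃ γ₂ r̃_{,-2}; (2) q̃_{,1,2} = −(φ_{,1} − φ + I)_{,2} q̃_{,1} − q̃_{,2} Q − q̃_{,2} γ₁ Ω̃_{,1}^{-1}; (3) q̃_t = q̃_{,2} + (φ_{,2} − φ) q̃ + q̃ γ₂ Ω̃^{-1}; (4) r̃_{,-2} = −r̃ (φ_{,1} − φ + I) − P r̃_{,1,-2} + Ω̃_{,2}^{-1} γ₁ r̃_{,1,-2}; (5) r̃_t = −r̃_{,-2} − r̃ (φ_{,2} − φ) + Ω̃_{,2}^{-1} γ₂ r̃. -/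

import Mathlib

/-!
Everything reduces to matrix identities at a fixed time `t`. The `t`-derivatives of `φ`, `q̃`, `r̃`
are computed entrywise by the Leibniz rule and `(Ω̃⁻¹)_t = -Ω̃⁻¹ Ω̃_t Ω̃⁻¹`, and the evolution
equations of `θ`, `η`, `Ω̃` are substituted. What remains collapses under two contraction rules:
`η θ = Ω̃_{,2} - Ω̃`, and
`Ω̃_{,2}⁻¹ γ₁ Ω̃_{,1}⁻¹ = P Ω̃_{,1}⁻¹ - Ω̃_{,2}⁻¹ Q + Ω̃_{,2}⁻¹ η θ_{,1} Ω̃_{,1}⁻¹`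
(a rewriting of the equation for `(Ω̃ P)_{,2}`), together with the shift equations for `θ` and
`η`, which eliminate `θ_{,1,2}` and `η_{,-2}`. The source terms are what is left of `γ₁` and
`γ₂` after these cancellations.
-/

open Matrix Filter Topology

section EntrywiseDerivative

variable {𝕜 𝔸 : Type*} [NontriviallyNormedField 𝕜] [NormedField 𝔸] [NormedAlgebra 𝕜 𝔸]
  {ι κ ν : Type*}

def HasEntrywiseDerivAt (F : 𝕜 → Matrix ι κ 𝔸) (F' : Matrix ι κ 𝔸) (t : 𝕜) : Prop :=
  ∀ a b, HasDerivAt (fun s => F s a b) (F' a b) t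

namespace HasEntrywiseDerivAt

variable {F G : 𝕜 → Matrix ι κ 𝔸} {F' G' : Matrix ι κ 𝔸} {t : 𝕜}

theorem differentiableAt (hF : HasEntrywiseDerivAt F F' t) (a : ι) (b : κ) :
    DifferentiableAt 𝕜 (fun s => F s a b) t :=
  (hF a b).differentiableAt

theorem add (hF : HasEntrywiseDerivAt F F' t) (hG : HasEntrywiseDerivAt G G' t) :
    HasEntrywiseDerivAt (fun s => F s + G s) (F' + G') t :=
  fun a b => (hF a b).add (hG a b)

theorem sub (hF : HasEntrywiseDerivAt F F' t) (hG : HasEntrywiseDerivAt G G' t) :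
    HasEntrywiseDerivAt (fun s => F s - G s) (F' - G') t :=
  fun a b => (hF a b).sub (hG a b)

theorem neg (hF : HasEntrywiseDerivAt F F' t) : HasEntrywiseDerivAt (fun s => -F s) (-F') t :=
  fun a b => (hF a b).neg

theorem mul [Fintype κ] {G : 𝕜 → Matrix κ ν 𝔸} {G' : Matrix κ ν 𝔸}
    (hF : HasEntrywiseDerivAt F F' t) (hG : HasEntrywiseDerivAt G G' t) :
    HasEntrywiseDerivAt (fun s => F s * G s) (F' * G t + F t * G') t := fun a b => by
  simpa only [mul_apply, Matrix.add_apply, Finset.sum_add_distrib] using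
    HasDerivAt.fun_sum fun c _ => (hF a c).fun_mul (hG c b)

theorem congr_deriv (hF : HasEntrywiseDerivAt F F' t) (h : F' = G') :
    HasEntrywiseDerivAt F G' t :=
  h ▸ hF

end HasEntrywiseDerivAt

variable [Fintype ι] [DecidableEq ι] {M : 𝕜 → Matrix ι ι 𝔸} {M' : Matrix ι ι 𝔸} {t : 𝕜}

theorem differentiableAt_det_of_entries
    (hM : ∀ a b, DifferentiableAt 𝕜 (fun s => M s a b) t) :
    DifferentiableAt 𝕜 (fun s => (M s).det) t := by
  simp only [det_apply']
  fun_prop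

theorem differentiableAt_inv_apply_of_entries
    (hM : ∀ a b, DifferentiableAt 𝕜 (fun s => M s a b) t) (hdet : (M t).det ≠ 0) (a b : ι) :
    DifferentiableAt 𝕜 (fun s => (M s)⁻¹ a b) t := by
  have hadj : DifferentiableAt 𝕜 (fun s => (M s).adjugate a b) t := by
    simp only [adjugate_apply]
    refine differentiableAt_det_of_entries fun c d => ?_
    rcases eq_or_ne c b with rfl | hcb
    · simp only [updateRow_self]
      fun_prop
    · simpa only [updateRow_ne hcb] using hM c d
  simp only [inv_def, Ring.inverse_eq_inv, Matrix.smul_apply, smul_eq_mul]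
  exact ((differentiableAt_det_of_entries hM).inv hdet).mul hadj

theorem HasEntrywiseDerivAt.inv (hM : HasEntrywiseDerivAt M M' t) (hMt : IsUnit (M t)) :
    HasEntrywiseDerivAt (fun s => (M s)⁻¹) (-((M t)⁻¹ * M' * (M t)⁻¹)) t := by
  have hdet : IsUnit (M t).det := (isUnit_iff_isUnit_det _).mp hMt
  have hdiff := differentiableAt_inv_apply_of_entries hM.differentiableAt hdet.ne_zero
  set N : Matrix ι ι 𝔸 := of fun a b => deriv (fun s => (M s)⁻¹ a b) t
  have hN : HasEntrywiseDerivAt (fun s => (M s)⁻¹) N t := fun a b => (hdiff a b).hasDerivAt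
  have hdet_ne : ∀ᶠ s in 𝓝 t, (M s).det ≠ 0 :=
    (differentiableAt_det_of_entries hM.differentiableAt).continuousAt.eventually_ne hdet.ne_zero
  -- differentiate `M * M⁻¹ = 1` near `t`
  have hprod : M' * (M t)⁻¹ + M t * N = 0 := by
    ext a b
    refine ((hM.mul hN) a b).unique
      ((hasDerivAt_const t ((1 : Matrix ι ι 𝔸) a b)).congr_of_eventuallyEq ?_)
    filter_upwards [hdet_ne] with s hs
    rw [mul_nonsing_inv _ (isUnit_iff_ne_zero.mpr hs)]
  have hN_eq : N = -((M t)⁻¹ * M' * (M t)⁻¹) := by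
    rw [← nonsing_inv_mul_cancel_left (A := M t) N hdet, eq_neg_of_add_eq_zero_right hprod]
    simp only [Matrix.mul_neg, Matrix.mul_assoc]
  exact hN_eq ▸ hN

end EntrywiseDerivative

/-- The data of the theorem at one fixed time; `i`, `j` stand for the lattice variables
`j₁`, `j₂` and `Ω` for `Ω̃`. -/
structure DarbouxLattice (ι κ R : Type*) [Fintype ι] [Fintype κ] [DecidableEq κ] [CommRing R]
    where
  φ₀ : ℤ → ℤ → Matrix ι ι R
  θ : ℤ → ℤ → Matrix ι κ R
  η : ℤ → ℤ → Matrix κ ι R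
  Ω : ℤ → ℤ → Matrix κ κ R
  P : Matrix κ κ R
  Q : Matrix κ κ R
  γ₁ : Matrix κ κ R
  isUnit_Ω : ∀ i j, IsUnit (Ω i j)
  θ_lax : ∀ i j, θ (i + 1) (j + 1) + θ i (j + 1) * P
    = -θ (i + 1) j - (φ₀ (i + 1) (j + 1) - φ₀ i (j + 1)) * θ (i + 1) j
  η_lax : ∀ i j, η i (j - 1) + Q * η (i + 1) (j - 1)
    = -η i j - η i j * (φ₀ (i + 1) j - φ₀ i j)
  Ω_succ_sub : ∀ i j, Ω i (j + 1) - Ω i j = η i j * θ i j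
  Ω_succ_mul_P : ∀ i j, Ω i (j + 1) * P = Q * Ω (i + 1) j - η i j * θ (i + 1) j + γ₁

namespace DarbouxLattice

variable {ι κ R : Type*} [Fintype ι] [Fintype κ] [DecidableEq κ] [CommRing R]
  (D : DarbouxLattice ι κ R) (γ₂ : Matrix κ κ R) (i j : ℤ)

noncomputable def φ : Matrix ι ι R := D.φ₀ i j + D.θ i j * (D.Ω i j)⁻¹ * D.η i (j - 1)

noncomputable def q : Matrix ι κ R := -(D.θ i j * (D.Ω i j)⁻¹)

noncomputable def r : Matrix κ ι R := -((D.Ω i (j + 1))⁻¹ * D.η i j)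

/-! The right-hand sides of the evolution equations for `θ`, `η` and `Ω̃`, which stand in for
the time derivatives in the identities below. -/

noncomputable def θFlow : Matrix ι κ R := D.θ i (j + 1) + (D.φ₀ i (j + 1) - D.φ₀ i j) * D.θ i j

noncomputable def ηFlow : Matrix κ ι R :=
  -D.η i (j - 1) - D.η i j * (D.φ₀ i (j + 1) - D.φ₀ i j)

noncomputable def ΩFlow : Matrix κ κ R := D.η i (j - 1) * D.θ i j - γ₂

noncomputable def correctionFlow : Matrix ι ι R :=
  (D.θFlow i j * (D.Ω i j)⁻¹ + D.θ i j * -((D.Ω i j)⁻¹ * D.ΩFlow γ₂ i j * (D.Ω i j)⁻¹))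
      * D.η i (j - 1)
    + D.θ i j * (D.Ω i j)⁻¹ * D.ηFlow i (j - 1)

variable {α : Type*}

theorem inv_Ω_mul_cancel_left (X : Matrix κ α R) : (D.Ω i j)⁻¹ * (D.Ω i j * X) = X :=
  nonsing_inv_mul_cancel_left _ X ((isUnit_iff_isUnit_det _).mp (D.isUnit_Ω i j))

theorem Ω_mul_inv_cancel_left (X : Matrix κ α R) : D.Ω i j * ((D.Ω i j)⁻¹ * X) = X :=
  mul_nonsing_inv_cancel_left _ X ((isUnit_iff_isUnit_det _).mp (D.isUnit_Ω i j))

theorem inv_Ω_mul_Ω : (D.Ω i j)⁻¹ * D.Ω i j = 1 :=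
  nonsing_inv_mul _ ((isUnit_iff_isUnit_det _).mp (D.isUnit_Ω i j))

theorem Ω_mul_inv_Ω : D.Ω i j * (D.Ω i j)⁻¹ = 1 :=
  mul_nonsing_inv _ ((isUnit_iff_isUnit_det _).mp (D.isUnit_Ω i j))

theorem η_mul_θ : D.η i j * D.θ i j = D.Ω i (j + 1) - D.Ω i j :=
  (D.Ω_succ_sub i j).symm

theorem η_mul_θ_mul (X : Matrix κ α R) :
    D.η i j * (D.θ i j * X) = D.Ω i (j + 1) * X - D.Ω i j * X := by
  rw [← Matrix.mul_assoc, η_mul_θ, Matrix.sub_mul]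

theorem γ₁_eq :
    D.γ₁ = D.Ω i (j + 1) * D.P - D.Q * D.Ω (i + 1) j + D.η i j * D.θ (i + 1) j := by
  rw [D.Ω_succ_mul_P]; abel

theorem inv_Ω_mul_γ₁_mul (X : Matrix κ α R) :
    (D.Ω i (j + 1))⁻¹ * (D.γ₁ * ((D.Ω (i + 1) j)⁻¹ * X))
      = D.P * ((D.Ω (i + 1) j)⁻¹ * X) - (D.Ω i (j + 1))⁻¹ * (D.Q * X)
        + (D.Ω i (j + 1))⁻¹ * (D.η i j * (D.θ (i + 1) j * ((D.Ω (i + 1) j)⁻¹ * X))) := by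
  simp only [D.γ₁_eq i j, Matrix.sub_mul, Matrix.add_mul, Matrix.mul_sub, Matrix.mul_add,
    Matrix.mul_assoc, inv_Ω_mul_cancel_left, Ω_mul_inv_cancel_left]

theorem θ_succ_succ : D.θ (i + 1) (j + 1)
    = -D.θ (i + 1) j - (D.φ₀ (i + 1) (j + 1) - D.φ₀ i (j + 1)) * D.θ (i + 1) j
      - D.θ i (j + 1) * D.P :=
  eq_sub_of_add_eq (D.θ_lax i j)

theorem η_pred : D.η i (j - 1)
    = -D.η i j - D.η i j * (D.φ₀ (i + 1) j - D.φ₀ i j) - D.Q * D.η (i + 1) (j - 1) :=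
  eq_sub_of_add_eq (D.η_lax i j)

theorem q_succ_succ [DecidableEq ι] : D.q (i + 1) (j + 1)
    = -((D.φ (i + 1) (j + 1) - D.φ i (j + 1) + 1) * D.q (i + 1) j)
      - D.q i (j + 1) * D.Q - D.q i (j + 1) * D.γ₁ * (D.Ω (i + 1) j)⁻¹ := by
  have hγ₁ := by simpa only [Matrix.mul_one] using D.inv_Ω_mul_γ₁_mul i j (1 : Matrix κ κ R)
  simp only [φ, q, θ_succ_succ, hγ₁, add_sub_cancel_right, η_mul_θ_mul, inv_Ω_mul_cancel_left,
    Ω_mul_inv_Ω, Matrix.mul_assoc, Matrix.mul_add, Matrix.add_mul, Matrix.mul_sub, Matrix.sub_mul,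
    Matrix.neg_mul, Matrix.mul_neg, Matrix.mul_one, Matrix.one_mul, neg_neg]
  abel

theorem r_pred [DecidableEq ι] : D.r i (j - 1)
    = -(D.r i j * (D.φ (i + 1) j - D.φ i j + 1)) - D.P * D.r (i + 1) (j - 1)
      + (D.Ω i (j + 1))⁻¹ * D.γ₁ * D.r (i + 1) (j - 1) := by
  simp only [φ, r, D.η_pred i j, sub_add_cancel, inv_Ω_mul_γ₁_mul, η_mul_θ_mul,
    inv_Ω_mul_cancel_left, Ω_mul_inv_cancel_left, Matrix.mul_assoc, Matrix.mul_add,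
    Matrix.mul_sub, Matrix.neg_mul, Matrix.mul_neg, Matrix.mul_one, neg_neg]
  abel

theorem q_flow :
    -(D.θFlow i j * (D.Ω i j)⁻¹ + D.θ i j * -((D.Ω i j)⁻¹ * D.ΩFlow γ₂ i j * (D.Ω i j)⁻¹))
      = D.q i (j + 1) + (D.φ i (j + 1) - D.φ i j) * D.q i j + D.q i j * γ₂ * (D.Ω i j)⁻¹ := by
  simp only [φ, q, θFlow, ΩFlow, add_sub_cancel_right, η_mul_θ_mul, inv_Ω_mul_cancel_left,
    Ω_mul_inv_Ω, Matrix.mul_assoc, Matrix.add_mul, Matrix.mul_sub, Matrix.sub_mul,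
    Matrix.neg_mul, Matrix.mul_neg, Matrix.mul_one]
  abel

theorem r_flow :
    -(-((D.Ω i (j + 1))⁻¹ * D.ΩFlow γ₂ i (j + 1) * (D.Ω i (j + 1))⁻¹) * D.η i j
        + (D.Ω i (j + 1))⁻¹ * D.ηFlow i j)
      = -D.r i (j - 1) - D.r i j * (D.φ i (j + 1) - D.φ i j)
        + (D.Ω i (j + 1))⁻¹ * γ₂ * D.r i j := by
  simp only [φ, r, ηFlow, ΩFlow, add_sub_cancel_right, sub_add_cancel, η_mul_θ_mul,
    inv_Ω_mul_cancel_left, Ω_mul_inv_cancel_left, Matrix.mul_assoc, Matrix.mul_add,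
    Matrix.mul_sub, Matrix.sub_mul, Matrix.neg_mul, Matrix.mul_neg, neg_neg]
  abel

theorem φ_flow [DecidableEq ι] (φ₀' : ℤ → ℤ → Matrix ι ι R)
    (hφ₀' : φ₀' (i + 1) j - φ₀' i j
      = (D.φ₀ i (j + 1) - D.φ₀ i j) * (D.φ₀ (i + 1) j - D.φ₀ i j + 1)
        - (D.φ₀ (i + 1) j - D.φ₀ i j + 1) * (D.φ₀ (i + 1) j - D.φ₀ (i + 1) (j - 1))) :
    (φ₀' (i + 1) j + D.correctionFlow γ₂ (i + 1) j) - (φ₀' i j + D.correctionFlow γ₂ i j)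
      = (D.φ i (j + 1) - D.φ i j) * (D.φ (i + 1) j - D.φ i j + 1)
        - (D.φ (i + 1) j - D.φ i j + 1) * (D.φ (i + 1) j - D.φ (i + 1) (j - 1))
        + D.q i j * D.γ₁ * D.r (i + 1) (j - 2)
        - D.q i (j + 1) * D.γ₁ * D.r (i + 1) (j - 1)
        + D.q (i + 1) j * γ₂ * D.r (i + 1) (j - 1)
        - D.q i j * γ₂ * D.r i (j - 1) := by
  have e₁ : j - 2 + 1 = j - 1 := by ring
  have e₂ : j - 1 - 1 = j - 2 := by ring
  have hφ₀'succ := eq_add_of_sub_eq hφ₀'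
  have hθ := D.θ_succ_succ i (j - 1)
  have hη := D.η_pred i (j - 1)
  have hγ₁ (X : Matrix κ ι R) := D.inv_Ω_mul_γ₁_mul i (j - 1) X
  simp only [sub_add_cancel, e₂] at hθ hη hγ₁
  simp only [φ, q, r, correctionFlow, θFlow, ηFlow, ΩFlow, hφ₀'succ, e₁, e₂, sub_add_cancel,
    add_sub_cancel_right, D.θ_succ_succ i j, hθ, D.η_pred i j, hη, hγ₁, inv_Ω_mul_γ₁_mul,
    η_mul_θ_mul, η_mul_θ, inv_Ω_mul_cancel_left, Ω_mul_inv_cancel_left, inv_Ω_mul_Ω,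
    Matrix.mul_assoc, Matrix.mul_add, Matrix.add_mul, Matrix.mul_sub, Matrix.sub_mul,
    Matrix.neg_mul, Matrix.mul_neg, Matrix.mul_one, Matrix.one_mul, neg_neg]
  abel

end DarbouxLattice

theorem stmt_16_general (m n : ℕ)
    (φ₀ φ₀t : ℝ → ℤ → ℤ → Matrix (Fin m) (Fin m) ℂ)
    (hφ₀t : ∀ t j₁ j₂ (a b : Fin m),
      HasDerivAt (fun s => φ₀ s j₁ j₂ a b) (φ₀t t j₁ j₂ a b) t)
    (hseed : ∀ t j₁ j₂,
      φ₀t t (j₁ + 1) j₂ - φ₀t t j₁ j₂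
        = (φ₀ t j₁ (j₂ + 1) - φ₀ t j₁ j₂) * (φ₀ t (j₁ + 1) j₂ - φ₀ t j₁ j₂ + 1)
          - (φ₀ t (j₁ + 1) j₂ - φ₀ t j₁ j₂ + 1)
            * (φ₀ t (j₁ + 1) j₂ - φ₀ t (j₁ + 1) (j₂ - 1)))
    (P Q : Matrix (Fin n) (Fin n) ℂ)
    (γ₁ γ₂ : ℝ → Matrix (Fin n) (Fin n) ℂ)
    (θ θt : ℝ → ℤ → ℤ → Matrix (Fin m) (Fin n) ℂ)
    (hθt : ∀ t j₁ j₂ (a : Fin m) (b : Fin n),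
      HasDerivAt (fun s => θ s j₁ j₂ a b) (θt t j₁ j₂ a b) t)
    -- (θ_{,1} + θ P)_{,2} = −θ_{,1} − (φ₀_{,1} − φ₀)_{,2} θ_{,1}
    (hθ1 : ∀ t j₁ j₂, θ t (j₁ + 1) (j₂ + 1) + θ t j₁ (j₂ + 1) * P
      = -θ t (j₁ + 1) j₂ - (φ₀ t (j₁ + 1) (j₂ + 1) - φ₀ t j₁ (j₂ + 1)) * θ t (j₁ + 1) j₂)
    -- θ_t = θ_{,2} + (φ₀_{,2} − φ₀) θ
    (hθ2 : ∀ t j₁ j₂, θt t j₁ j₂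
      = θ t j₁ (j₂ + 1) + (φ₀ t j₁ (j₂ + 1) - φ₀ t j₁ j₂) * θ t j₁ j₂)
    (η ηt : ℝ → ℤ → ℤ → Matrix (Fin n) (Fin m) ℂ)
    (hηt : ∀ t j₁ j₂ (a : Fin n) (b : Fin m),
      HasDerivAt (fun s => η s j₁ j₂ a b) (ηt t j₁ j₂ a b) t)
    -- (η + Q η_{,1})_{,-2} = −η − η (φ₀_{,1} − φ₀)
    (hη1 : ∀ t j₁ j₂, η t j₁ (j₂ - 1) + Q * η t (j₁ + 1) (j₂ - 1)
      = -η t j₁ j₂ - η t j₁ j₂ * (φ₀ t (j₁ + 1) j₂ - φ₀ t j₁ j₂))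
    -- η_t = −η_{,-2} − η (φ₀_{,2} − φ₀)
    (hη2 : ∀ t j₁ j₂, ηt t j₁ j₂
      = -η t j₁ (j₂ - 1) - η t j₁ j₂ * (φ₀ t j₁ (j₂ + 1) - φ₀ t j₁ j₂))
    (Om Omt : ℝ → ℤ → ℤ → Matrix (Fin n) (Fin n) ℂ)
    (hOminv : ∀ t j₁ j₂, IsUnit (Om t j₁ j₂))
    (hOmt : ∀ t j₁ j₂ (a b : Fin n),
      HasDerivAt (fun s => Om s j₁ j₂ a b) (Omt t j₁ j₂ a b) t)
    (hOm1 : ∀ t j₁ j₂, Om t j₁ (j₂ + 1) - Om t j₁ j₂ = η t j₁ j₂ * θ t j₁ j₂)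
    -- (Ω̃ P)_{,2} = Q Ω̃_{,1} − η θ_{,1} + γ₁
    (hOm2 : ∀ t j₁ j₂, Om t j₁ (j₂ + 1) * P
      = Q * Om t (j₁ + 1) j₂ - η t j₁ j₂ * θ t (j₁ + 1) j₂ + γ₁ t)
    -- Ω̃_t = η_{,-2} θ − γ₂
    (hOm3 : ∀ t j₁ j₂, Omt t j₁ j₂ = η t j₁ (j₂ - 1) * θ t j₁ j₂ - γ₂ t)
    (φ : ℝ → ℤ → ℤ → Matrix (Fin m) (Fin m) ℂ)
    (qq : ℝ → ℤ → ℤ → Matrix (Fin m) (Fin n) ℂ)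
    (rr : ℝ → ℤ → ℤ → Matrix (Fin n) (Fin m) ℂ)
    (hφ : ∀ t j₁ j₂, φ t j₁ j₂
      = φ₀ t j₁ j₂ + θ t j₁ j₂ * (Om t j₁ j₂)⁻¹ * η t j₁ (j₂ - 1))
    (hqq : ∀ t j₁ j₂, qq t j₁ j₂ = -(θ t j₁ j₂ * (Om t j₁ j₂)⁻¹))
    (hrr : ∀ t j₁ j₂, rr t j₁ j₂ = -((Om t j₁ (j₂ + 1))⁻¹ * η t j₁ j₂)) :
    -- (1)  (φ_{,1} − φ)_t + (φ_{,1} − φ + I)(φ_{,2} − φ)_{,1,-2} − (φ_{,2} − φ)(φ_{,1} − φ + I)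
    --        = (q̃_{,2} γ₁ r̃_{,1,-2})_{,-2} − q̃_{,2} γ₁ r̃_{,1,-2}
    --          + (q̃ γ₂ r̃_{,-2})_{,1} − q̃ γ₂ r̃_{,-2}
    (∀ t j₁ j₂ (a b : Fin m),
      HasDerivAt (fun s => (φ s (j₁ + 1) j₂ - φ s j₁ j₂) a b)
        (((φ t j₁ (j₂ + 1) - φ t j₁ j₂) * (φ t (j₁ + 1) j₂ - φ t j₁ j₂ + 1)
          - (φ t (j₁ + 1) j₂ - φ t j₁ j₂ + 1) * (φ t (j₁ + 1) j₂ - φ t (j₁ + 1) (j₂ - 1))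
          + qq t j₁ j₂ * γ₁ t * rr t (j₁ + 1) (j₂ - 2)
          - qq t j₁ (j₂ + 1) * γ₁ t * rr t (j₁ + 1) (j₂ - 1)
          + qq t (j₁ + 1) j₂ * γ₂ t * rr t (j₁ + 1) (j₂ - 1)
          - qq t j₁ j₂ * γ₂ t * rr t j₁ (j₂ - 1) : Matrix (Fin m) (Fin m) ℂ) a b) t) ∧
    -- (2)  q̃_{,1,2} = −(φ_{,1} − φ + I)_{,2} q̃_{,1} − q̃_{,2} Q − q̃_{,2} γ₁ Ω̃_{,1}⁻¹
    (∀ t j₁ j₂, qq t (j₁ + 1) (j₂ + 1)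
      = -((φ t (j₁ + 1) (j₂ + 1) - φ t j₁ (j₂ + 1) + 1) * qq t (j₁ + 1) j₂)
        - qq t j₁ (j₂ + 1) * Q - qq t j₁ (j₂ + 1) * γ₁ t * (Om t (j₁ + 1) j₂)⁻¹) ∧
    -- (3)  q̃_t = q̃_{,2} + (φ_{,2} − φ) q̃ + q̃ γ₂ Ω̃⁻¹
    (∀ t j₁ j₂ (a : Fin m) (b : Fin n),
      HasDerivAt (fun s => qq s j₁ j₂ a b)
        ((qq t j₁ (j₂ + 1) + (φ t j₁ (j₂ + 1) - φ t j₁ j₂) * qq t j₁ j₂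
          + qq t j₁ j₂ * γ₂ t * (Om t j₁ j₂)⁻¹) a b) t) ∧
    -- (4)  r̃_{,-2} = −r̃ (φ_{,1} − φ + I) − P r̃_{,1,-2} + Ω̃_{,2}⁻¹ γ₁ r̃_{,1,-2}
    (∀ t j₁ j₂, rr t j₁ (j₂ - 1)
      = -(rr t j₁ j₂ * (φ t (j₁ + 1) j₂ - φ t j₁ j₂ + 1)) - P * rr t (j₁ + 1) (j₂ - 1)
        + (Om t j₁ (j₂ + 1))⁻¹ * γ₁ t * rr t (j₁ + 1) (j₂ - 1)) ∧
    -- (5)  r̃_t = −r̃_{,-2} − r̃ (φ_{,2} − φ) + Ω̃_{,2}⁻¹ γ₂ r̃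
    (∀ t j₁ j₂ (a : Fin n) (b : Fin m),
      HasDerivAt (fun s => rr s j₁ j₂ a b)
        ((-rr t j₁ (j₂ - 1) - rr t j₁ j₂ * (φ t j₁ (j₂ + 1) - φ t j₁ j₂)
          + (Om t j₁ (j₂ + 1))⁻¹ * γ₂ t * rr t j₁ j₂) a b) t) := by
  obtain rfl := funext₃ hφ
  obtain rfl := funext₃ hqq
  obtain rfl := funext₃ hrr
  obtain rfl := funext₃ hθ2
  obtain rfl := funext₃ hη2
  obtain rfl := funext₃ hOm3
  let D t : DarbouxLattice (Fin m) (Fin n) ℂ :=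
    ⟨φ₀ t, θ t, η t, Om t, P, Q, γ₁ t, hOminv t, hθ1 t, hη1 t, hOm1 t, hOm2 t⟩
  have hOm_inv t j₁ j₂ := HasEntrywiseDerivAt.inv (hOmt t j₁ j₂) (hOminv t j₁ j₂)
  have hcorr t j₁ j₂ :=
    (HasEntrywiseDerivAt.mul (hθt t j₁ j₂) (hOm_inv t j₁ j₂)).mul (hηt t j₁ (j₂ - 1))
  refine ⟨fun t j₁ j₂ => ?_, fun t j₁ j₂ => (D t).q_succ_succ j₁ j₂, fun t j₁ j₂ => ?_,
    fun t j₁ j₂ => (D t).r_pred j₁ j₂, fun t j₁ j₂ => ?_⟩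
  · exact ((HasEntrywiseDerivAt.add (hφ₀t t (j₁ + 1) j₂) (hcorr t (j₁ + 1) j₂)).sub
      (HasEntrywiseDerivAt.add (hφ₀t t j₁ j₂) (hcorr t j₁ j₂))).congr_deriv
      ((D t).φ_flow (γ₂ t) j₁ j₂ (φ₀t t) (hseed t j₁ j₂))
  · exact (HasEntrywiseDerivAt.mul (hθt t j₁ j₂) (hOm_inv t j₁ j₂)).neg.congr_deriv
      ((D t).q_flow (γ₂ t) j₁ j₂)
  · exact (HasEntrywiseDerivAt.mul (hOm_inv t j₁ (j₂ + 1)) (hηt t j₁ j₂)).neg.congr_deriv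
      ((D t).r_flow (γ₂ t) j₁ j₂)

/-- binary Darboux transformation / self-consistent source extension for the
Miura-dual equation.  Given a solution `φ₀` of
`(φ₀_{,1} − φ₀)_t = (φ₀_{,2} − φ₀)(φ₀_{,1} − φ₀ + I) − (φ₀_{,1} − φ₀ + I)(φ₀_{,2} − φ₀)_{,1,-2}`,
constant `P, Q`, `ω̃ (= om)` a function of `t` only, `γ₁ = ω̃ P − Q ω̃`, `γ₂ = −ω̃_t`,
solutions `θ, η` of the linear system, and an invertible solution `Ω̃ (= Om)`, the quantities
`φ = φ₀ + θ Ω̃⁻¹ η_{,-2}`, `q̃ (= qq) = −θ Ω̃⁻¹`, `r̃ (= rr) = −Ω̃_{,2}⁻¹ η` satisfy the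
source-extended equations (1)–(5). -/
theorem stmt_16 (m n : ℕ)
    (φ₀ φ₀t : ℝ → ℤ → ℤ → Matrix (Fin m) (Fin m) ℂ)
    (hφ₀t : ∀ t j₁ j₂ (a b : Fin m),
      HasDerivAt (fun s => φ₀ s j₁ j₂ a b) (φ₀t t j₁ j₂ a b) t)
    (hseed : ∀ t j₁ j₂,
      φ₀t t (j₁ + 1) j₂ - φ₀t t j₁ j₂
        = (φ₀ t j₁ (j₂ + 1) - φ₀ t j₁ j₂) * (φ₀ t (j₁ + 1) j₂ - φ₀ t j₁ j₂ + 1)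
          - (φ₀ t (j₁ + 1) j₂ - φ₀ t j₁ j₂ + 1)
            * (φ₀ t (j₁ + 1) j₂ - φ₀ t (j₁ + 1) (j₂ - 1)))
    (P Q : Matrix (Fin n) (Fin n) ℂ)
    (om omt : ℝ → Matrix (Fin n) (Fin n) ℂ)
    (homt : ∀ t (a b : Fin n), HasDerivAt (fun s => om s a b) (omt t a b) t)
    (γ₁ γ₂ : ℝ → Matrix (Fin n) (Fin n) ℂ)
    (hγ₁ : ∀ t, γ₁ t = om t * P - Q * om t)
    (hγ₂ : ∀ t, γ₂ t = -omt t)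
    (θ θt : ℝ → ℤ → ℤ → Matrix (Fin m) (Fin n) ℂ)
    (hθt : ∀ t j₁ j₂ (a : Fin m) (b : Fin n),
      HasDerivAt (fun s => θ s j₁ j₂ a b) (θt t j₁ j₂ a b) t)
    -- (θ_{,1} + θ P)_{,2} = −θ_{,1} − (φ₀_{,1} − φ₀)_{,2} θ_{,1}
    (hθ1 : ∀ t j₁ j₂, θ t (j₁ + 1) (j₂ + 1) + θ t j₁ (j₂ + 1) * P
      = -θ t (j₁ + 1) j₂ - (φ₀ t (j₁ + 1) (j₂ + 1) - φ₀ t j₁ (j₂ + 1)) * θ t (j₁ + 1) j₂)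
    -- θ_t = θ_{,2} + (φ₀_{,2} − φ₀) θ
    (hθ2 : ∀ t j₁ j₂, θt t j₁ j₂
      = θ t j₁ (j₂ + 1) + (φ₀ t j₁ (j₂ + 1) - φ₀ t j₁ j₂) * θ t j₁ j₂)
    (η ηt : ℝ → ℤ → ℤ → Matrix (Fin n) (Fin m) ℂ)
    (hηt : ∀ t j₁ j₂ (a : Fin n) (b : Fin m),
      HasDerivAt (fun s => η s j₁ j₂ a b) (ηt t j₁ j₂ a b) t)
    -- (η + Q η_{,1})_{,-2} = −η − η (φ₀_{,1} − φ₀)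
    (hη1 : ∀ t j₁ j₂, η t j₁ (j₂ - 1) + Q * η t (j₁ + 1) (j₂ - 1)
      = -η t j₁ j₂ - η t j₁ j₂ * (φ₀ t (j₁ + 1) j₂ - φ₀ t j₁ j₂))
    -- η_t = −η_{,-2} − η (φ₀_{,2} − φ₀)
    (hη2 : ∀ t j₁ j₂, ηt t j₁ j₂
      = -η t j₁ (j₂ - 1) - η t j₁ j₂ * (φ₀ t j₁ (j₂ + 1) - φ₀ t j₁ j₂))
    (Om Omt : ℝ → ℤ → ℤ → Matrix (Fin n) (Fin n) ℂ)
    (hOminv : ∀ t j₁ j₂, IsUnit (Om t j₁ j₂))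
    (hOmt : ∀ t j₁ j₂ (a b : Fin n),
      HasDerivAt (fun s => Om s j₁ j₂ a b) (Omt t j₁ j₂ a b) t)
    (hOm1 : ∀ t j₁ j₂, Om t j₁ (j₂ + 1) - Om t j₁ j₂ = η t j₁ j₂ * θ t j₁ j₂)
    -- (Ω̃ P)_{,2} = Q Ω̃_{,1} − η θ_{,1} + γ₁
    (hOm2 : ∀ t j₁ j₂, Om t j₁ (j₂ + 1) * P
      = Q * Om t (j₁ + 1) j₂ - η t j₁ j₂ * θ t (j₁ + 1) j₂ + γ₁ t)
    -- Ω̃_t = η_{,-2} θ − γ₂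
    (hOm3 : ∀ t j₁ j₂, Omt t j₁ j₂ = η t j₁ (j₂ - 1) * θ t j₁ j₂ - γ₂ t)
    (φ : ℝ → ℤ → ℤ → Matrix (Fin m) (Fin m) ℂ)
    (qq : ℝ → ℤ → ℤ → Matrix (Fin m) (Fin n) ℂ)
    (rr : ℝ → ℤ → ℤ → Matrix (Fin n) (Fin m) ℂ)
    (hφ : ∀ t j₁ j₂, φ t j₁ j₂
      = φ₀ t j₁ j₂ + θ t j₁ j₂ * (Om t j₁ j₂)⁻¹ * η t j₁ (j₂ - 1))
    (hqq : ∀ t j₁ j₂, qq t j₁ j₂ = -(θ t j₁ j₂ * (Om t j₁ j₂)⁻¹))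
    (hrr : ∀ t j₁ j₂, rr t j₁ j₂ = -((Om t j₁ (j₂ + 1))⁻¹ * η t j₁ j₂)) :
    -- (1)  (φ_{,1} − φ)_t + (φ_{,1} − φ + I)(φ_{,2} − φ)_{,1,-2} − (φ_{,2} − φ)(φ_{,1} − φ + I)
    --        = (q̃_{,2} γ₁ r̃_{,1,-2})_{,-2} − q̃_{,2} γ₁ r̃_{,1,-2}
    --          + (q̃ γ₂ r̃_{,-2})_{,1} − q̃ γ₂ r̃_{,-2}
    (∀ t j₁ j₂ (a b : Fin m),
      HasDerivAt (fun s => (φ s (j₁ + 1) j₂ - φ s j₁ j₂) a b)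
        (((φ t j₁ (j₂ + 1) - φ t j₁ j₂) * (φ t (j₁ + 1) j₂ - φ t j₁ j₂ + 1)
          - (φ t (j₁ + 1) j₂ - φ t j₁ j₂ + 1) * (φ t (j₁ + 1) j₂ - φ t (j₁ + 1) (j₂ - 1))
          + qq t j₁ j₂ * γ₁ t * rr t (j₁ + 1) (j₂ - 2)
          - qq t j₁ (j₂ + 1) * γ₁ t * rr t (j₁ + 1) (j₂ - 1)
          + qq t (j₁ + 1) j₂ * γ₂ t * rr t (j₁ + 1) (j₂ - 1)
          - qq t j₁ j₂ * γ₂ t * rr t j₁ (j₂ - 1) : Matrix (Fin m) (Fin m) ℂ) a b) t) ∧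
    -- (2)  q̃_{,1,2} = −(φ_{,1} − φ + I)_{,2} q̃_{,1} − q̃_{,2} Q − q̃_{,2} γ₁ Ω̃_{,1}⁻¹
    (∀ t j₁ j₂, qq t (j₁ + 1) (j₂ + 1)
      = -((φ t (j₁ + 1) (j₂ + 1) - φ t j₁ (j₂ + 1) + 1) * qq t (j₁ + 1) j₂)
        - qq t j₁ (j₂ + 1) * Q - qq t j₁ (j₂ + 1) * γ₁ t * (Om t (j₁ + 1) j₂)⁻¹) ∧
    -- (3)  q̃_t = q̃_{,2} + (φ_{,2} − φ) q̃ + q̃ γ₂ Ω̃⁻¹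
    (∀ t j₁ j₂ (a : Fin m) (b : Fin n),
      HasDerivAt (fun s => qq s j₁ j₂ a b)
        ((qq t j₁ (j₂ + 1) + (φ t j₁ (j₂ + 1) - φ t j₁ j₂) * qq t j₁ j₂
          + qq t j₁ j₂ * γ₂ t * (Om t j₁ j₂)⁻¹) a b) t) ∧
    -- (4)  r̃_{,-2} = −r̃ (φ_{,1} − φ + I) − P r̃_{,1,-2} + Ω̃_{,2}⁻¹ γ₁ r̃_{,1,-2}
    (∀ t j₁ j₂, rr t j₁ (j₂ - 1)
      = -(rr t j₁ j₂ * (φ t (j₁ + 1) j₂ - φ t j₁ j₂ + 1)) - P * rr t (j₁ + 1) (j₂ - 1)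
        + (Om t j₁ (j₂ + 1))⁻¹ * γ₁ t * rr t (j₁ + 1) (j₂ - 1)) ∧
    -- (5)  r̃_t = −r̃_{,-2} − r̃ (φ_{,2} − φ) + Ω̃_{,2}⁻¹ γ₂ r̃
    (∀ t j₁ j₂ (a : Fin n) (b : Fin m),
      HasDerivAt (fun s => rr s j₁ j₂ a b)
        ((-rr t j₁ (j₂ - 1) - rr t j₁ j₂ * (φ t j₁ (j₂ + 1) - φ t j₁ j₂)
          + (Om t j₁ (j₂ + 1))⁻¹ * γ₂ t * rr t j₁ j₂) a b) t) :=
  stmt_16_general m n φ₀ φ₀t hφ₀t hseed P Q γ₁ γ₂ θ θt hθt hθ1 hθ2 η ηt hηt hη1 hη2 Om Omt hOminv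
    hOmt hOm1 hOm2 hOm3 φ qq rr hφ hqq hrr
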